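/- (Corollary 1, off-sample case.) Let x_1,…,x_N ∈ ℝ^d be pairwise distinct, let z ∈ ℝ^N, and let h : ℝ → ℝ be continuous at 0 and at 1 with h(1) ≠ h(0) and (N−1)h(0) + h(1) ≠ 0. For δ > 0 define K_δ ∈ ℝ^{N×N} by (K_δ)_{ij} = h(exp(−δ²‖x_i − x_j‖²)), and for δ with K_δ invertible define Φ_δ(x) = ∑_{i=1}^{N} (K_δ^{-1}z)_i · h(exp(−δ²‖x − x_i‖²)). Then for every x ∈ ℝ^d with x ∉ {x_1,…,x_N}, lim_{δ→∞} Φ_δ(x) = h(0)·(∑_{i=1}^{N} z_i) / ((N−1)h(0) + h(1)). In particular, the limiting prediction at every point outside the training set is the same constant, independent of x. -/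

import Mathlib

/-!
As `δ → ∞`, every factor `exp (-δ ^ 2 * ‖u - v‖ ^ 2)` with `u ≠ v` tends to `0`, so `K δ` tends to
the matrix `L` with `h 1` on the diagonal and `h 0` off it, which is invertible, and every factor
of `Φ δ y` off the training set tends to `h 0`. Hence `Φ δ y → h 0 * ∑ i, (L⁻¹ *ᵥ z) i`, and summing
the rows of `L *ᵥ w = z` gives `∑ i, w i = (∑ i, z i) / ((N - 1) * h 0 + h 1)`.
-/

open Filter Topology
open scoped Matrix

namespace Matrix

variable {n α : Type*} [DecidableEq n]

def diagOffDiag (a b : α) : Matrix n n α :=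
  of fun i j => if i = j then a else b

variable [Fintype n] [Field α] {a b : α}

theorem diagOffDiag_mulVec_apply (v : n → α) (i : n) :
    (diagOffDiag a b *ᵥ v) i = (a - b) * v i + b * ∑ j, v j := by
  have hsplit : ∀ j, (if i = j then a else b) * v j =
      (if i = j then (a - b) * v j else 0) + b * v j := fun j => by split_ifs <;> ring
  simp only [diagOffDiag, mulVec, dotProduct, of_apply, hsplit, Finset.sum_add_distrib,
    Finset.sum_ite_eq, Finset.mem_univ, if_true, Finset.mul_sum]

theorem sum_diagOffDiag_mulVec (v : n → α) :
    ∑ i, (diagOffDiag a b *ᵥ v) i = (((Fintype.card n : α) - 1) * b + a) * ∑ j, v j := by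
  simp only [diagOffDiag_mulVec_apply, Finset.sum_add_distrib, ← Finset.mul_sum,
    Finset.sum_const, Finset.card_univ, nsmul_eq_mul]
  ring

-- The eigenvalues of `diagOffDiag a b` are `a - b` and `(card n - 1) * b + a`.
theorem det_diagOffDiag_ne_zero (hab : a ≠ b) (hsum : ((Fintype.card n : α) - 1) * b + a ≠ 0) :
    (diagOffDiag a b : Matrix n n α).det ≠ 0 := by
  rw [Ne, ← exists_mulVec_eq_zero_iff]
  rintro ⟨v, hv, hker⟩
  have hsum_v : ∑ j, v j = 0 := by
    simpa [hker, hsum] using (sum_diagOffDiag_mulVec (a := a) (b := b) v).symm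
  refine hv (funext fun i => ?_)
  have := congr_fun hker i
  rw [diagOffDiag_mulVec_apply, hsum_v, mul_zero, add_zero] at this
  simpa [sub_ne_zero.2 hab] using this

theorem sum_diagOffDiag_inv_mulVec (hab : a ≠ b)
    (hsum : ((Fintype.card n : α) - 1) * b + a ≠ 0) (v : n → α) :
    ∑ i, ((diagOffDiag a b)⁻¹ *ᵥ v) i = (∑ j, v j) / (((Fintype.card n : α) - 1) * b + a) := by
  have hinv : (diagOffDiag a b : Matrix n n α) * (diagOffDiag a b)⁻¹ = 1 :=
    mul_nonsing_inv _ (isUnit_iff_ne_zero.2 (det_diagOffDiag_ne_zero hab hsum))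
  rw [eq_div_iff hsum, mul_comm, ← sum_diagOffDiag_mulVec, mulVec_mulVec, hinv, one_mulVec]

end Matrix

theorem tendsto_exp_neg_sq_mul_atTop {c : ℝ} (hc : 0 < c) :
    Tendsto (fun δ : ℝ => Real.exp (-δ ^ 2 * c)) atTop (𝓝 0) := by
  have : Tendsto (fun δ : ℝ => δ ^ 2 * c) atTop atTop :=
    (tendsto_pow_atTop two_ne_zero).atTop_mul_const hc
  simpa only [neg_mul, Function.comp_def] using
    Real.tendsto_exp_atBot.comp (tendsto_neg_atTop_atBot.comp this)

theorem ContinuousAt.tendsto_comp_exp_neg_sq_mul_norm_sub_sq {E : Type*} [NormedAddCommGroup E]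
    {h : ℝ → ℝ} (hh : ContinuousAt h 0) {u v : E} (huv : u ≠ v) :
    Tendsto (fun δ : ℝ => h (Real.exp (-δ ^ 2 * ‖u - v‖ ^ 2))) atTop (𝓝 (h 0)) :=
  hh.tendsto.comp (tendsto_exp_neg_sq_mul_atTop (by positivity [sub_ne_zero.2 huv]))

theorem tendsto_gaussian_kernel_matrix {ι E : Type*} [Fintype ι] [DecidableEq ι]
    [NormedAddCommGroup E] {x : ι → E} (hx : Function.Injective x) {h : ℝ → ℝ}
    (hh : ContinuousAt h 0) :
    Tendsto (fun δ : ℝ => Matrix.of fun i j => h (Real.exp (-δ ^ 2 * ‖x i - x j‖ ^ 2))) atTop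
      (𝓝 (Matrix.diagOffDiag (h 1) (h 0))) := by
  refine tendsto_pi_nhds.2 fun i => tendsto_pi_nhds.2 fun j => ?_
  by_cases hij : i = j
  · subst hij
    simp [Matrix.diagOffDiag]
  · simpa [Matrix.diagOffDiag, hij] using
      hh.tendsto_comp_exp_neg_sq_mul_norm_sub_sq (hx.ne hij)

theorem ntk_regression_off_sample_general {d N : ℕ}
    (x : Fin N → EuclideanSpace ℝ (Fin d)) (hx : Function.Injective x)
    (z : Fin N → ℝ)
    (h : ℝ → ℝ) (h0 : ContinuousAt h 0)
    (hne : h 1 ≠ h 0) (hsum : ((N : ℝ) - 1) * h 0 + h 1 ≠ 0)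
    (K : ℝ → Matrix (Fin N) (Fin N) ℝ)
    (hK : ∀ δ i j, K δ i j = h (Real.exp (-δ ^ 2 * ‖x i - x j‖ ^ 2)))
    (Φ : ℝ → EuclideanSpace ℝ (Fin d) → ℝ)
    (hΦ : ∀ δ y, Φ δ y = ∑ i, ((K δ)⁻¹ *ᵥ z) i * h (Real.exp (-δ ^ 2 * ‖y - x i‖ ^ 2))) :
    ∀ y : EuclideanSpace ℝ (Fin d), (∀ i, y ≠ x i) →
      Tendsto (fun δ : ℝ => Φ δ y) atTop
        (nhds (h 0 * (∑ i, z i) / (((N : ℝ) - 1) * h 0 + h 1))) := by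
  intro y hy
  set L : Matrix (Fin N) (Fin N) ℝ := Matrix.diagOffDiag (h 1) (h 0)
  have hcard : ((Fintype.card (Fin N) : ℝ) - 1) * h 0 + h 1 ≠ 0 := by simpa using hsum
  have hKL : Tendsto K atTop (𝓝 L) := by
    convert tendsto_gaussian_kernel_matrix hx h0 with δ
    exact Matrix.ext (hK δ)
  have hinv : ContinuousAt Inv.inv L := by
    refine continuousAt_matrix_inv L ?_
    rw [Ring.inverse_eq_inv']
    exact continuousAt_inv₀ (Matrix.det_diagOffDiag_ne_zero hne hcard)
  have hweights : Tendsto (fun δ => (K δ)⁻¹ *ᵥ z) atTop (𝓝 (L⁻¹ *ᵥ z)) :=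
    ((continuous_id.matrix_mulVec continuous_const).continuousAt.comp hinv).tendsto.comp hKL
  have hlim : Tendsto (fun δ => Φ δ y) atTop (𝓝 (∑ i, (L⁻¹ *ᵥ z) i * h 0)) := by
    simp only [hΦ]
    exact tendsto_finsetSum _ fun i _ =>
      (tendsto_pi_nhds.1 hweights i).mul (h0.tendsto_comp_exp_neg_sq_mul_norm_sub_sq (hy i))
  rwa [← Finset.sum_mul, Matrix.sum_diagOffDiag_inv_mulVec hne hcard, Fintype.card_fin,
    div_mul_eq_mul_div, mul_comm] at hlim

/-- Corollary 1, off-sample case: for every point `y` outside the training set, the kernel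
regression predictor `Φ_δ(y) = ∑ i, (K_δ⁻¹ z) i * h(exp(−δ²‖y − xᵢ‖²))` with
`(K_δ)_{ij} = h(exp(−δ²‖xᵢ − xⱼ‖²))` converges, as `δ → ∞`, to the constant
`h 0 · (∑ i, z i) / ((N−1)·h 0 + h 1)`, independent of `y`. -/
theorem ntk_regression_off_sample {d N : ℕ}
    (x : Fin N → EuclideanSpace ℝ (Fin d)) (hx : Function.Injective x)
    (z : Fin N → ℝ)
    (h : ℝ → ℝ) (h0 : ContinuousAt h 0) (h1 : ContinuousAt h 1)
    (hne : h 1 ≠ h 0) (hsum : ((N : ℝ) - 1) * h 0 + h 1 ≠ 0)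
    (K : ℝ → Matrix (Fin N) (Fin N) ℝ)
    (hK : ∀ δ i j, K δ i j = h (Real.exp (-δ ^ 2 * ‖x i - x j‖ ^ 2)))
    (Φ : ℝ → EuclideanSpace ℝ (Fin d) → ℝ)
    (hΦ : ∀ δ y, Φ δ y = ∑ i, ((K δ)⁻¹ *ᵥ z) i * h (Real.exp (-δ ^ 2 * ‖y - x i‖ ^ 2))) :
    ∀ y : EuclideanSpace ℝ (Fin d), (∀ i, y ≠ x i) →
      Tendsto (fun δ : ℝ => Φ δ y) atTop
        (nhds (h 0 * (∑ i, z i) / (((N : ℝ) - 1) * h 0 + h 1))) :=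
  ntk_regression_off_sample_general x hx z h h0 hne hsum K hK Φ hΦ
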